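/- arXiv:1804.00073 — 3 statements merged into one kernel-verified Lean document; each statement's English description precedes it below -/
import Mathlib

section
/- If P is a stable set of assignments (SSA) for a CNF formula H with respect to an AC-mapping Φ and center p_init, then the formula H is unsatisfiable. -/
open Function

abbrev Clause (V : Type*) := Finset (V × Bool)
abbrev CNF (V : Type*) := Set (Clause V)

def satLit {V : Type*} (p : V → Bool) (l : V × Bool) : Prop := p l.1 = l.2

def satClause {V : Type*} (p : V → Bool) (C : Clause V) : Prop := ∃ l ∈ C, satLit p l

def satCNF {V : Type*} (p : V → Bool) (H : CNF V) : Prop := ∀ C ∈ H, satClause p C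

def falsifies {V : Type*} (p : V → Bool) (C : Clause V) : Prop := ¬ satClause p C

/-- Hamming distance between two assignments. -/
def hdist {V : Type*} [Fintype V] [DecidableEq V] (p q : V → Bool) : ℕ :=
  (Finset.univ.filter fun v => p v ≠ q v).card

/-- The assignment obtained from `p` by flipping the value of variable `v`. -/
def flipAt {V : Type*} [DecidableEq V] (p : V → Bool) (v : V) : V → Bool :=
  Function.update p v (!p v)

/-- `Nbhd p C`: assignments at Hamming distance 1 from `p` satisfying `C`. -/
def Nbhd {V : Type*} [Fintype V] [DecidableEq V] (p : V → Bool) (C : Clause V) :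
    Set (V → Bool) :=
  {r | hdist p r = 1 ∧ satClause r C}

/-- `NbhdC q p C`: members of `Nbhd p C` strictly farther from `q` than `p` is. -/
def NbhdC {V : Type*} [Fintype V] [DecidableEq V] (q p : V → Bool) (C : Clause V) :
    Set (V → Bool) :=
  {r | hdist p r = 1 ∧ satClause r C ∧ hdist q r > hdist q p}

/-- `P` is a stable set of assignments (SSA) of `H` with center `pinit` and AC-mapping `Φ`. -/
def IsSSA {V : Type*} [Fintype V] [DecidableEq V] (H : CNF V) (P : Set (V → Bool))
    (pinit : V → Bool) (Φ : (V → Bool) → Clause V) : Prop :=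
  pinit ∈ P ∧ ∀ p ∈ P, Φ p ∈ H ∧ falsifies p (Φ p) ∧ NbhdC pinit p (Φ p) ⊆ P

/-!
Suppose `s` satisfies `H`. Starting from `pinit`, walk through `P` towards `s`, keeping every
visited `p` on a shortest path from `pinit` to `s` (each variable agrees with `pinit` or with `s`).
Since `s` satisfies `Φ p` and `p` does not, some literal of `Φ p` is true in `s` and false in `p`;
flipping its variable moves `p` one step away from `pinit` and one step closer to `s`, so the flip
lies in `NbhdC pinit p (Φ p) ⊆ P`. The distance to `s` cannot decrease forever, yet reaching `s`
is impossible because `s` falsifies no clause of `H`.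
-/

section Flip

variable {V : Type*} [DecidableEq V]

@[simp]
lemma flipAt_apply_self (p : V → Bool) (v : V) : flipAt p v v = !p v :=
  update_self v _ p

lemma flipAt_apply_of_ne (p : V → Bool) {v w : V} (h : w ≠ v) : flipAt p v w = p w :=
  update_of_ne h _ p

variable [Fintype V]

lemma filter_ne_flipAt (q p : V → Bool) (v : V) :
    (Finset.univ.filter fun w => q w ≠ flipAt p v w) =
      if q v = p v then insert v (Finset.univ.filter fun w => q w ≠ p w)
      else (Finset.univ.filter fun w => q w ≠ p w).erase v := by
  ext w
  by_cases hw : w = v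
  · subst hw
    split_ifs with h <;> simp [h]
  · split_ifs <;> simp [hw, flipAt_apply_of_ne p hw]

lemma hdist_flipAt_of_eq {q p : V → Bool} {v : V} (h : q v = p v) :
    hdist q (flipAt p v) = hdist q p + 1 := by
  rw [hdist, filter_ne_flipAt, if_pos h, Finset.card_insert_of_notMem (by simp [h]), hdist]

lemma hdist_flipAt_of_ne {q p : V → Bool} {v : V} (h : q v ≠ p v) :
    hdist q (flipAt p v) + 1 = hdist q p := by
  rw [hdist, filter_ne_flipAt, if_neg h, Finset.card_erase_add_one (by simp [h]), hdist]

lemma hdist_self_flipAt (p : V → Bool) (v : V) : hdist p (flipAt p v) = 1 := by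
  rw [hdist_flipAt_of_eq rfl]
  simp [hdist]

end Flip

section Clause

variable {V : Type*}

def IsBetween (q s p : V → Bool) : Prop := ∀ v, p v = q v ∨ p v = s v

lemma isBetween_left (q s : V → Bool) : IsBetween q s q := fun _ => Or.inl rfl

variable [DecidableEq V]

lemma exists_flipAt_satClause {p s : V → Bool} {C : Clause V} (hp : falsifies p C)
    (hs : satClause s C) : ∃ v, p v ≠ s v ∧ satClause (flipAt p v) C := by
  obtain ⟨⟨v, b⟩, hvC, hsv⟩ := hs
  have hpv : p v ≠ b := fun hpv => hp ⟨(v, b), hvC, hpv⟩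
  exact ⟨v, fun h => hpv (h.trans hsv), (v, b), hvC,
    (flipAt_apply_self p v).trans (Bool.eq_not_iff.mpr hpv.symm).symm⟩

lemma IsBetween.flipAt {q s p : V → Bool} (hp : IsBetween q s p) {v : V} (hv : p v ≠ s v) :
    IsBetween q s (flipAt p v) := by
  intro w
  by_cases hw : w = v
  · subst hw
    exact Or.inr (by rw [flipAt_apply_self, Bool.eq_not_iff.mpr hv, Bool.not_not])
  · rw [flipAt_apply_of_ne p hw]
    exact hp w

end Clause

namespace IsSSA

variable {V : Type*} [Fintype V] [DecidableEq V] {H : CNF V} {P : Set (V → Bool)}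
  {pinit : V → Bool} {Φ : (V → Bool) → Clause V}

lemma flipAt_mem (h : IsSSA H P pinit Φ) {p : V → Bool} (hp : p ∈ P) {v : V}
    (hv : p v = pinit v) (hsat : satClause (flipAt p v) (Φ p)) : flipAt p v ∈ P :=
  (h.2 p hp).2.2 ⟨hdist_self_flipAt p v, hsat, by rw [hdist_flipAt_of_eq hv.symm]; omega⟩

lemma exists_mem_isBetween_hdist_lt (h : IsSSA H P pinit Φ) {s p : V → Bool}
    (hs : satCNF s H) (hp : p ∈ P) (hb : IsBetween pinit s p) :
    ∃ r ∈ P, IsBetween pinit s r ∧ hdist s r < hdist s p := by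
  obtain ⟨hΦ, hfalse, -⟩ := h.2 p hp
  obtain ⟨v, hvs, hsat⟩ := exists_flipAt_satClause hfalse (hs _ hΦ)
  have hv : p v = pinit v := (hb v).resolve_right hvs
  have hcloser := hdist_flipAt_of_ne (Ne.symm hvs)
  exact ⟨flipAt p v, h.flipAt_mem hp hv hsat, hb.flipAt hvs, by omega⟩

theorem not_satCNF (h : IsSSA H P pinit Φ) (s : V → Bool) : ¬ satCNF s H := by
  intro hs
  obtain ⟨p, ⟨hp, hb⟩, hmin⟩ := (measure (hdist s)).wf.has_min
    {p | p ∈ P ∧ IsBetween pinit s p} ⟨pinit, h.1, isBetween_left pinit s⟩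
  obtain ⟨r, hr, hrb, hlt⟩ := h.exists_mem_isBetween_hdist_lt hs hp hb
  exact hmin r ⟨hr, hrb⟩ hlt

end IsSSA

/-- an SSA of `H` witnesses unsatisfiability of `H`. -/
theorem ssa_implies_unsat {V : Type*} [Fintype V] [DecidableEq V]
    (H : CNF V) (P : Set (V → Bool)) (pinit : V → Bool)
    (Φ : (V → Bool) → Clause V) (h : IsSSA H P pinit Φ) :
    ¬ ∃ s : V → Bool, satCNF s H :=
  fun ⟨s, hs⟩ => h.not_satCNF s hs
end

section
/- A CNF formula H over a finite set of variables is unsatisfiable if and only if H has a stable set of assignments. -/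
open Function

lemma hdist_eq_zero {V : Type*} [Fintype V] [DecidableEq V] {q p : V → Bool}
    (h : hdist q p = 0) : q = p := by
  unfold hdist at h
  funext w
  by_contra hw
  have hmem : w ∈ Finset.univ.filter fun v => q v ≠ p v := by simp [hw]
  have := Finset.card_pos.mpr ⟨w, hmem⟩
  omega

lemma hdist_flip_self {V : Type*} [Fintype V] [DecidableEq V] (p : V → Bool) (v : V) :
    hdist p (flipAt p v) = 1 := by
  unfold hdist flipAt
  have : (Finset.univ.filter fun w => p w ≠ Function.update p v (!p v) w) = {v} := by
    ext w
    by_cases h : w = v <;> simp [h, Function.update_apply]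
  rw [this]; simp

lemma hdist_flip_of_eq {V : Type*} [Fintype V] [DecidableEq V] {q p : V → Bool} {v : V}
    (h : q v = p v) : hdist q (flipAt p v) = hdist q p + 1 := by
  unfold hdist flipAt
  have hset : (Finset.univ.filter fun w => q w ≠ Function.update p v (!p v) w)
      = insert v (Finset.univ.filter fun w => q w ≠ p w) := by
    ext w
    by_cases hw : w = v
    · subst hw; simp [Function.update_apply, h]
    · simp [hw, Function.update_apply]
  rw [hset, Finset.card_insert_of_notMem (by simp [h])]

lemma hdist_flip_of_ne {V : Type*} [Fintype V] [DecidableEq V] {q p : V → Bool} {v : V}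
    (h : q v ≠ p v) : hdist q (flipAt p v) + 1 = hdist q p := by
  unfold hdist flipAt
  have hqv : q v = !p v := by revert h; cases q v <;> cases p v <;> simp
  have hset : (Finset.univ.filter fun w => q w ≠ p w)
      = insert v (Finset.univ.filter fun w => q w ≠ Function.update p v (!p v) w) := by
    ext w
    by_cases hw : w = v
    · subst hw; simp [Function.update_apply, h]
    · simp [hw, Function.update_apply]
  rw [hset, Finset.card_insert_of_notMem (by simp [Function.update_apply, hqv])]

/-- a CNF formula is unsatisfiable iff it has an SSA. -/
theorem unsat_iff_exists_ssa {V : Type*} [Fintype V] [DecidableEq V] (H : CNF V) :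
    (∀ p : V → Bool, ¬ satCNF p H) ↔
    ∃ (P : Set (V → Bool)) (pinit : V → Bool) (Φ : (V → Bool) → Clause V),
      IsSSA H P pinit Φ := by
  constructor
  · intro hunsat
    have hex : ∀ p : V → Bool, ∃ C, C ∈ H ∧ falsifies p C := by
      intro p
      have h := hunsat p
      unfold satCNF at h
      push_neg at h
      obtain ⟨C, hC, hf⟩ := h
      exact ⟨C, hC, hf⟩
    refine ⟨Set.univ, fun _ => false, fun p => (hex p).choose, trivial, ?_⟩
    intro p _
    obtain ⟨h1, h2⟩ := (hex p).choose_spec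
    exact ⟨h1, h2, fun r _ => trivial⟩
  · rintro ⟨P, pinit, Φ, hinit, hssa⟩ q hq
    suffices h : ∀ n (p : V → Bool), p ∈ P →
        (∀ w, p w ≠ q w → p w = pinit w) → hdist q p = n → False from
      h (hdist q pinit) pinit hinit (fun _ _ => rfl) rfl
    intro n
    induction n with
    | zero =>
      intro p hp _ h0
      obtain ⟨hΦH, hfals, _⟩ := hssa p hp
      have : q = p := hdist_eq_zero h0
      subst this
      exact hfals (hq _ hΦH)
    | succ n ih =>
      intro p hp hinv hn
      obtain ⟨hΦH, hfals, hsub⟩ := hssa p hp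
      obtain ⟨l, hl, hql⟩ := hq _ hΦH
      have hpl : p l.1 ≠ q l.1 := by
        intro h
        exact hfals ⟨l, hl, by rw [satLit, h]; exact hql⟩
      set v := l.1 with hv
      set r := flipAt p v with hrdef
      have hrv : r v = q v := by
        have : r v = !p v := by simp [hrdef, flipAt]
        rw [this]
        revert hpl; cases p v <;> cases q v <;> simp
      have hr1 : hdist p r = 1 := hdist_flip_self p v
      have hpv : pinit v = p v := (hinv v hpl).symm
      have hfar : hdist pinit r > hdist pinit p := by
        rw [hrdef, hdist_flip_of_eq hpv]; omega
      have hrsat : satClause r (Φ p) := ⟨l, hl, by rw [satLit, ← hv, hrv]; exact hql⟩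
      have hrP : r ∈ P := hsub ⟨hr1, hrsat, hfar⟩
      have hinv' : ∀ w, r w ≠ q w → r w = pinit w := by
        intro w hw
        by_cases hwv : w = v
        · subst hwv; exact absurd hrv hw
        · have hrw : r w = p w := by simp [hrdef, flipAt, Function.update_apply, hwv]
          rw [hrw] at hw ⊢
          exact hinv w hw
      have hdn : hdist q r = n := by
        have := hdist_flip_of_ne (p := p) (v := v) (Ne.symm hpl)
        rw [← hrdef] at this
        omega
      exact ih r hrP hinv' hdn
end

section
/- Let N ≡ 0 (F_N ∧ z is unsatisfiable), let R be a cut of N with subcircuit N_R between R and the output such that F_{N_R} ∧ z is unsatisfiable, and let P_R be an SSA of F_{N_R} ∧ z. Let v be any fixed assignment to the variables of N not in N_R. Then the set P obtained by extending every assignment of P_R with v is an SSA of F_N ∧ z. -/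
open Function

/- Extending by a fixed `v` only ever moves the `A`-coordinates: a neighbour of `Sum.elim p v`
that satisfies a lifted clause falsified by `p` must flip an `A`-variable, and having used its
single flip there it agrees with `v` on `B`. So the SSA conditions for the extension reduce to
those of `PR`, and the lifted clauses lie in `F`. -/

theorem hdist_eq_hammingDist {V : Type*} [Fintype V] [DecidableEq V] (p q : V → Bool) :
    hdist p q = hammingDist p q :=
  rfl

theorem hdist_sumElim {A B : Type*} [Fintype A] [DecidableEq A] [Fintype B] [DecidableEq B]
    (p p' : A → Bool) (v v' : B → Bool) :
    hdist (Sum.elim p v) (Sum.elim p' v') = hdist p p' + hdist v v' := by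
  simp only [hdist, ← Fintype.card_subtype, ← Fintype.card_sum]
  exact Fintype.card_congr Equiv.subtypeSum

theorem hdist_sumElim_left {A B : Type*} [Fintype A] [DecidableEq A] [Fintype B]
    [DecidableEq B] (p p' : A → Bool) (v : B → Bool) :
    hdist (Sum.elim p v) (Sum.elim p' v) = hdist p p' := by
  rw [hdist_sumElim, hdist_eq_hammingDist v, hammingDist_self, add_zero]

def Clause.liftInl {A B : Type*} [DecidableEq A] [DecidableEq B] (C : Clause A) :
    Clause (A ⊕ B) :=
  C.image fun l => (Sum.inl l.1, l.2)

theorem satClause_liftInl_iff {A B : Type*} [DecidableEq A] [DecidableEq B]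
    (q : A ⊕ B → Bool) (C : Clause A) :
    satClause q (C.liftInl : Clause (A ⊕ B)) ↔ satClause (q ∘ Sum.inl) C := by
  simp only [satClause, Clause.liftInl, Finset.mem_image]
  constructor
  · rintro ⟨_, ⟨l, hl, rfl⟩, hsat⟩
    exact ⟨l, hl, hsat⟩
  · rintro ⟨l, hl, hsat⟩
    exact ⟨_, ⟨l, hl, rfl⟩, hsat⟩

theorem eq_sumElim_of_mem_nbhd_liftInl {A B : Type*} [Fintype A] [DecidableEq A]
    [Fintype B] [DecidableEq B] {p : A → Bool} {v : B → Bool} {C : Clause A}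
    (hp : falsifies p C) {r : A ⊕ B → Bool} (hr : r ∈ Nbhd (Sum.elim p v) C.liftInl) :
    r = Sum.elim (r ∘ Sum.inl) v := by
  obtain ⟨hdist_one, hsat⟩ := hr
  have hflipA : 0 < hdist p (r ∘ Sum.inl) := by
    rw [hdist_eq_hammingDist, hammingDist_pos]
    rintro rfl
    exact hp ((satClause_liftInl_iff r C).1 hsat)
  have hsplit := hdist_sumElim p (r ∘ Sum.inl) v (r ∘ Sum.inr)
  rw [Sum.elim_comp_inl_inr] at hsplit
  have hB : hdist v (r ∘ Sum.inr) = 0 := by omega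
  rw [hdist_eq_hammingDist, hammingDist_eq_zero] at hB
  rw [hB, Sum.elim_comp_inl_inr]

theorem IsSSA.mono {V : Type*} [Fintype V] [DecidableEq V] {H H' : CNF V} {P : Set (V → Bool)}
    {pinit : V → Bool} {Φ : (V → Bool) → Clause V} (hP : IsSSA H P pinit Φ) (hH : H ⊆ H') :
    IsSSA H' P pinit Φ :=
  ⟨hP.1, fun p hp => ⟨hH (hP.2 p hp).1, (hP.2 p hp).2⟩⟩

theorem IsSSA.sumElim {A B : Type*} [Fintype A] [DecidableEq A] [Fintype B] [DecidableEq B]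
    {H : CNF A} {P : Set (A → Bool)} {pinit : A → Bool} {Φ : (A → Bool) → Clause A}
    (hP : IsSSA H P pinit Φ) (v : B → Bool) :
    IsSSA (Clause.liftInl '' H) {q | ∃ p ∈ P, q = Sum.elim p v} (Sum.elim pinit v)
      (fun q => (Φ (q ∘ Sum.inl)).liftInl) := by
  refine ⟨⟨pinit, hP.1, rfl⟩, ?_⟩
  rintro _ ⟨p, hp, rfl⟩
  obtain ⟨hmem, hfals, hnbhd⟩ := hP.2 p hp
  refine ⟨⟨_, hmem, rfl⟩, fun hsat => hfals ((satClause_liftInl_iff _ _).1 hsat), ?_⟩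
  rintro r ⟨hdist_one, hsat, hfar⟩
  have hr := eq_sumElim_of_mem_nbhd_liftInl hfals ⟨hdist_one, hsat⟩
  have hstep := hdist_sumElim_left p (r ∘ Sum.inl) v
  have hfar_r := hdist_sumElim_left pinit (r ∘ Sum.inl) v
  have hfar_p := hdist_sumElim_left pinit p v
  rw [← hr] at hstep hfar_r
  exact ⟨r ∘ Sum.inl, hnbhd ⟨by omega, (satClause_liftInl_iff r _).1 hsat, by omega⟩, hr⟩

theorem extend_ssa_of_subcircuit_general {A B : Type*} [Fintype A] [DecidableEq A]
    [Fintype B] [DecidableEq B]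
    (F : CNF (A ⊕ B)) (FR : CNF A)
    (hsub : ∀ C ∈ FR, (C.image fun l => ((Sum.inl l.1 : A ⊕ B), l.2)) ∈ F)
    (PR : Set (A → Bool)) (pinitR : A → Bool) (ΦR : (A → Bool) → Clause A)
    (hssa : IsSSA FR PR pinitR ΦR) (v : B → Bool) :
    ∃ Φ : (A ⊕ B → Bool) → Clause (A ⊕ B),
      IsSSA F {q : A ⊕ B → Bool | ∃ p ∈ PR, q = Sum.elim p v}
        (Sum.elim pinitR v) Φ :=
  ⟨_, (hssa.sumElim v).mono <| by
    rintro _ ⟨C, hC, rfl⟩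
    exact hsub C hC⟩

/-- let the variables of `N` split as `A ⊕ B` where `A` are the variables
of the subcircuit `N_R` (between the cut `R` and the output). Suppose `F` (encoding
`F_N ∧ z`) is unsatisfiable, every clause of `FR` (encoding `F_{N_R} ∧ z`) is a clause
of `F`, and `PR` is an SSA of `FR`. Then extending every assignment of `PR` by a fixed
assignment `v` to the remaining variables yields an SSA of `F`. -/
theorem extend_ssa_of_subcircuit {A B : Type*} [Fintype A] [DecidableEq A]
    [Fintype B] [DecidableEq B]
    (F : CNF (A ⊕ B)) (FR : CNF A)
    (hsub : ∀ C ∈ FR, (C.image fun l => ((Sum.inl l.1 : A ⊕ B), l.2)) ∈ F)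
    (hFunsat : ∀ p : A ⊕ B → Bool, ¬ satCNF p F)
    (PR : Set (A → Bool)) (pinitR : A → Bool) (ΦR : (A → Bool) → Clause A)
    (hssa : IsSSA FR PR pinitR ΦR) (v : B → Bool) :
    ∃ Φ : (A ⊕ B → Bool) → Clause (A ⊕ B),
      IsSSA F {q : A ⊕ B → Bool | ∃ p ∈ PR, q = Sum.elim p v}
        (Sum.elim pinitR v) Φ :=
  extend_ssa_of_subcircuit_general F FR hsub PR pinitR ΦR hssa v
end
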